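/- arXiv:2604.13830 — 5 statements merged into one kernel-verified Lean document; each statement's English description precedes it below -/
import Mathlib

section
/- Let H be a real inner product space and let x, s, m ∈ H. Let σ_*, σ* be real numbers with 0 < σ_* ≤ σ*. Assume (i) ⟨s, x⟩ ≥ 0, (ii) ⟨m, x⟩ ≥ σ_*‖x‖², and (iii) ‖m‖ ≤ σ*‖x‖. Then (‖x‖² + ‖s‖²)^{1/2} ≤ C_gr · ‖s + m‖, where C_gr = (σ_*⁻² + (1 + σ*/σ_*)²)^{1/2}. -/
open RealInnerProductSpace

/-- Abstract graph-norm control: in a real inner product space, if `⟪s, x⟫ ≥ 0`,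
`⟪m, x⟫ ≥ σ_* ‖x‖²`, and `‖m‖ ≤ σ* ‖x‖` with `0 < σ_* ≤ σ*`, then
`(‖x‖² + ‖s‖²)^{1/2} ≤ C_gr ‖s + m‖` with `C_gr = (σ_*⁻² + (1 + σ*/σ_*)²)^{1/2}`. -/
theorem graph_norm_control
    {H : Type*} [NormedAddCommGroup H] [InnerProductSpace ℝ H]
    (x s m : H) (σstar σsup : ℝ)
    (hσstar : 0 < σstar) (hσ : σstar ≤ σsup)
    (hs : ⟪s, x⟫ ≥ 0)
    (hm : ⟪m, x⟫ ≥ σstar * ‖x‖ ^ 2)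
    (hmn : ‖m‖ ≤ σsup * ‖x‖) :
    Real.sqrt (‖x‖ ^ 2 + ‖s‖ ^ 2)
      ≤ Real.sqrt (σstar⁻¹ ^ 2 + (1 + σsup / σstar) ^ 2) * ‖s + m‖ := by
  set r := ‖s + m‖ with hr
  have hr0 : 0 ≤ r := norm_nonneg _
  -- ‖x‖ ≤ r / σstar
  have h1 : σstar * ‖x‖ ^ 2 ≤ ⟪s + m, x⟫ := by
    rw [inner_add_left]; linarith
  have h2 : ⟪s + m, x⟫ ≤ r * ‖x‖ := real_inner_le_norm _ _
  have hx : σstar * ‖x‖ ≤ r := by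
    rcases eq_or_lt_of_le (norm_nonneg x) with h | h
    · rw [← h]; simpa using hr0
    · have := h1.trans h2
      rw [pow_two] at this
      nlinarith
  have hxr : ‖x‖ ≤ σstar⁻¹ * r := by
    rw [inv_mul_eq_div, le_div_iff₀ hσstar]; linarith
  have hsr : ‖s‖ ≤ (1 + σsup / σstar) * r := by
    have : ‖s‖ ≤ r + ‖m‖ := by
      calc ‖s‖ = ‖s + m - m‖ := by rw [add_sub_cancel_right]
        _ ≤ ‖s + m‖ + ‖m‖ := norm_sub_le _ _
    have hm' : ‖m‖ ≤ σsup * (σstar⁻¹ * r) := by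
      refine hmn.trans ?_
      exact mul_le_mul_of_nonneg_left hxr (le_of_lt (hσstar.trans_le hσ))
    have : ‖s‖ ≤ r + σsup / σstar * r := by
      rw [div_mul_eq_mul_div, mul_div_assoc, ← inv_mul_eq_div] at *
      linarith
    linarith [this]
  have key : ‖x‖ ^ 2 + ‖s‖ ^ 2 ≤ (σstar⁻¹ ^ 2 + (1 + σsup / σstar) ^ 2) * r ^ 2 := by
    have hx2 : ‖x‖ ^ 2 ≤ (σstar⁻¹ * r) ^ 2 := pow_le_pow_left₀ (norm_nonneg x) hxr 2
    have hs2 : ‖s‖ ^ 2 ≤ ((1 + σsup / σstar) * r) ^ 2 := pow_le_pow_left₀ (norm_nonneg s) hsr 2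
    calc ‖x‖ ^ 2 + ‖s‖ ^ 2 ≤ (σstar⁻¹ * r) ^ 2 + ((1 + σsup / σstar) * r) ^ 2 :=
          add_le_add hx2 hs2
      _ = (σstar⁻¹ ^ 2 + (1 + σsup / σstar) ^ 2) * r ^ 2 := by ring
  calc Real.sqrt (‖x‖ ^ 2 + ‖s‖ ^ 2)
      ≤ Real.sqrt ((σstar⁻¹ ^ 2 + (1 + σsup / σstar) ^ 2) * r ^ 2) := Real.sqrt_le_sqrt key
    _ = Real.sqrt (σstar⁻¹ ^ 2 + (1 + σsup / σstar) ^ 2) * r := by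
        rw [Real.sqrt_mul (by positivity), Real.sqrt_sq hr0]
end

section
/- Let b > 0 and let Ψ : ℝ × ℝ → ℝ be continuous on [−b,b] × [−1,1] with continuous partial derivative ∂ₓΨ on [−b,b] × [−1,1], satisfying Ψ(b,μ) = 0 for all μ ∈ [−1,0] and Ψ(−b,μ) = 0 for all μ ∈ [0,1]. Let Σ_t : ℝ → ℝ be continuous on [−b,b] and let σ_* > 0 satisfy Σ_t(x) ≥ σ_* for all x ∈ [−b,b]. Then ∫_{−1}^{1} ∫_{−b}^{b} (μ ∂ₓΨ(x,μ) + Σ_t(x)Ψ(x,μ)) Ψ(x,μ) dx dμ ≥ σ_* ∫_{−1}^{1} ∫_{−b}^{b} Ψ(x,μ)² dx dμ. -/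
/-!
Integrating in `x`, the streaming term `μ Ψ ∂ₓΨ = (μ/2) ∂ₓ(Ψ²)` contributes only the boundary flux
`μ (Ψ(b,μ)² - Ψ(-b,μ)²) / 2`, which is nonnegative because the vacuum condition kills `Ψ` at the
end of the slab through which direction `μ` enters. What remains, `∫ Σ_t Ψ²`, dominates
`σ_* ∫ Ψ²` pointwise in `μ`, and integrating over `μ` gives the claim.
-/

open Set MeasureTheory

theorem continuousOn_intervalIntegral_of_continuousOn_prod {X E : Type*} [TopologicalSpace X]
    [NormedAddCommGroup E] [NormedSpace ℝ E] {f : ℝ → X → E} {a b : ℝ} (hab : a ≤ b)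
    {s : Set X} (hf : ContinuousOn f.uncurry (Icc a b ×ˢ s)) :
    ContinuousOn (fun y => ∫ x in a..b, f x y) s := by
  -- Projecting `x` onto `[a, b]` leaves the integral unchanged and makes the integrand
  -- continuous on all of `s × ℝ`.
  have hproj : ∀ y, ∫ x in a..b, f x y = ∫ x in a..b, f (projIcc a b hab x) y := fun y =>
    intervalIntegral.integral_congr fun x hx => by
      rw [projIcc_of_mem hab (uIcc_of_le hab ▸ hx)]
  simp_rw [hproj]
  rw [continuousOn_iff_continuous_domRestrict]
  refine intervalIntegral.continuous_parametric_intervalIntegral_of_continuous'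
    (f := fun (y : s) x => f (projIcc a b hab x) y) ?_ a b
  exact hf.comp_continuous (f := fun p : s × ℝ => ((projIcc a b hab p.2 : ℝ), (p.1 : X)))
    (by fun_prop) fun p => ⟨(projIcc a b hab p.2).2, p.1.2⟩

theorem integral_deriv_mul_self_eq {f f' : ℝ → ℝ} {a b : ℝ}
    (hf : ∀ x ∈ uIcc a b, HasDerivWithinAt f (f' x) (uIcc a b) x)
    (hf' : ContinuousOn f' (uIcc a b)) :
    ∫ x in a..b, f' x * f x = (f b ^ 2 - f a ^ 2) / 2 := by
  have hcont : ContinuousOn f (uIcc a b) := fun x hx => (hf x hx).continuousWithinAt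
  have hint : IntervalIntegrable (fun x => f' x * f x) volume a b :=
    (hf'.mul hcont).intervalIntegrable
  have hparts := intervalIntegral.integral_deriv_mul_eq_sub_of_hasDerivWithinAt hf hf
    hf'.intervalIntegrable hf'.intervalIntegrable
  simp_rw [mul_comm (f _) (f' _), intervalIntegral.integral_add hint hint] at hparts
  linear_combination hparts / 2

theorem boundary_flux_nonneg_of_vacuum {μ u v : ℝ} (hout : μ ≤ 0 → u = 0)
    (hin : 0 ≤ μ → v = 0) :
    0 ≤ μ * (u ^ 2 - v ^ 2) := by
  rcases le_total μ 0 with hμ | hμ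
  · rw [hout hμ]
    nlinarith [sq_nonneg v]
  · rw [hin hμ]
    nlinarith [sq_nonneg u]

theorem mul_integral_sq_le_integral_transport_of_flux_nonneg {f f' σ : ℝ → ℝ} {a b μ c : ℝ}
    (hab : a ≤ b)
    (hf : ∀ x ∈ Icc a b, HasDerivWithinAt f (f' x) (Icc a b) x)
    (hf' : ContinuousOn f' (Icc a b)) (hσ : ContinuousOn σ (Icc a b))
    (hlow : ∀ x ∈ Icc a b, c ≤ σ x) (hflux : 0 ≤ μ * (f b ^ 2 - f a ^ 2)) :
    c * ∫ x in a..b, f x ^ 2 ≤ ∫ x in a..b, (μ * f' x + σ x * f x) * f x := by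
  rw [← uIcc_of_le hab] at hf hf' hσ
  have hcont : ContinuousOn f (uIcc a b) := fun x hx => (hf x hx).continuousWithinAt
  have hstream : IntervalIntegrable (fun x => μ * (f' x * f x)) volume a b :=
    ((hf'.mul hcont).const_smul μ).intervalIntegrable
  have habs : IntervalIntegrable (fun x => σ x * f x ^ 2) volume a b :=
    (hσ.mul (hcont.pow 2)).intervalIntegrable
  calc c * ∫ x in a..b, f x ^ 2 = ∫ x in a..b, c * f x ^ 2 :=
        (intervalIntegral.integral_const_mul _ _).symm
    _ ≤ ∫ x in a..b, σ x * f x ^ 2 :=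
        intervalIntegral.integral_mono_on hab ((hcont.pow 2).intervalIntegrable.const_mul c) habs
          fun x hx => mul_le_mul_of_nonneg_right (hlow x hx) (sq_nonneg _)
    _ ≤ μ * ((f b ^ 2 - f a ^ 2) / 2) + ∫ x in a..b, σ x * f x ^ 2 := by linarith
    _ = ∫ x in a..b, (μ * f' x + σ x * f x) * f x := by
        rw [← integral_deriv_mul_self_eq hf hf', ← intervalIntegral.integral_const_mul,
          ← intervalIntegral.integral_add hstream habs]
        congr 1 with x
        ring

theorem transport_coercivity_slab_general
    (b : ℝ) (hb : 0 < b) (Ψ Ψx : ℝ → ℝ → ℝ) (sigmaT : ℝ → ℝ) (σstar : ℝ)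
    (hΨ : ContinuousOn (fun p : ℝ × ℝ => Ψ p.1 p.2) (Icc (-b) b ×ˢ Icc (-1) 1))
    (hΨx : ContinuousOn (fun p : ℝ × ℝ => Ψx p.1 p.2) (Icc (-b) b ×ˢ Icc (-1) 1))
    (hderiv : ∀ μ ∈ Icc (-1 : ℝ) 1, ∀ x ∈ Icc (-b) b,
      HasDerivWithinAt (fun t => Ψ t μ) (Ψx x μ) (Icc (-b) b) x)
    (hsigmaT : ContinuousOn sigmaT (Icc (-b) b))
    (hlow : ∀ x ∈ Icc (-b) b, σstar ≤ sigmaT x)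
    (hin₁ : ∀ μ ∈ Icc (-1 : ℝ) 0, Ψ b μ = 0)
    (hin₂ : ∀ μ ∈ Icc (0 : ℝ) 1, Ψ (-b) μ = 0) :
    σstar * ∫ μ in (-1 : ℝ)..1, ∫ x in (-b)..b, (Ψ x μ) ^ 2
      ≤ ∫ μ in (-1 : ℝ)..1, ∫ x in (-b)..b,
          (μ * Ψx x μ + sigmaT x * Ψ x μ) * Ψ x μ := by
  have hbb : -b ≤ b := by linarith
  have hdir : uIcc (-1 : ℝ) 1 = Icc (-1) 1 := uIcc_of_le (by norm_num)
  have hmass : ContinuousOn (fun μ => ∫ x in (-b)..b, (Ψ x μ) ^ 2) (Icc (-1) 1) :=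
    continuousOn_intervalIntegral_of_continuousOn_prod hbb (hΨ.pow 2)
  have hform : ContinuousOn (fun μ => ∫ x in (-b)..b, (μ * Ψx x μ + sigmaT x * Ψ x μ) * Ψ x μ)
      (Icc (-1) 1) :=
    continuousOn_intervalIntegral_of_continuousOn_prod hbb <|
      ((continuousOn_snd.mul hΨx).add
        ((hsigmaT.comp continuousOn_fst fun _ hp => hp.1).mul hΨ)).mul hΨ
  rw [← intervalIntegral.integral_const_mul]
  refine intervalIntegral.integral_mono_on (by norm_num)
    ((hdir ▸ hmass).intervalIntegrable.const_mul σstar) (hdir ▸ hform).intervalIntegrable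
    fun μ hμ => mul_integral_sq_le_integral_transport_of_flux_nonneg hbb (hderiv μ hμ)
      (hΨx.uncurry_right μ hμ) hsigmaT hlow <|
        boundary_flux_nonneg_of_vacuum (fun h => hin₁ μ ⟨hμ.1, h⟩) fun h => hin₂ μ ⟨h, hμ.2⟩

/-- Coercivity of the 1D slab streaming–absorption operator under the vacuum
boundary condition: `(𝒟Ψ,Ψ) ≥ σ_* ‖Ψ‖₀²`. -/
theorem transport_coercivity_slab
    (b : ℝ) (hb : 0 < b) (Ψ Ψx : ℝ → ℝ → ℝ) (sigmaT : ℝ → ℝ) (σstar : ℝ)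
    (hΨ : ContinuousOn (fun p : ℝ × ℝ => Ψ p.1 p.2) (Icc (-b) b ×ˢ Icc (-1) 1))
    (hΨx : ContinuousOn (fun p : ℝ × ℝ => Ψx p.1 p.2) (Icc (-b) b ×ˢ Icc (-1) 1))
    (hderiv : ∀ μ ∈ Icc (-1 : ℝ) 1, ∀ x ∈ Icc (-b) b,
      HasDerivWithinAt (fun t => Ψ t μ) (Ψx x μ) (Icc (-b) b) x)
    (hsigmaT : ContinuousOn sigmaT (Icc (-b) b))
    (hσstar : 0 < σstar)
    (hlow : ∀ x ∈ Icc (-b) b, σstar ≤ sigmaT x)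
    (hin₁ : ∀ μ ∈ Icc (-1 : ℝ) 0, Ψ b μ = 0)
    (hin₂ : ∀ μ ∈ Icc (0 : ℝ) 1, Ψ (-b) μ = 0) :
    σstar * ∫ μ in (-1 : ℝ)..1, ∫ x in (-b)..b, (Ψ x μ) ^ 2
      ≤ ∫ μ in (-1 : ℝ)..1, ∫ x in (-b)..b,
          (μ * Ψx x μ + sigmaT x * Ψ x μ) * Ψ x μ :=
  transport_coercivity_slab_general b hb Ψ Ψx sigmaT σstar hΨ hΨx hderiv hsigmaT hlow hin₁ hin₂
end

section
/- Let b > 0 and let Ψ : ℝ × ℝ → ℝ be continuous on [−b,b] × [−1,1] with continuous partial derivative ∂ₓΨ on [−b,b] × [−1,1], satisfying Ψ(b,μ) = 0 for all μ ∈ [−1,0] and Ψ(−b,μ) = 0 for all μ ∈ [0,1]. Let Σ_t : ℝ → ℝ be continuous on [−b,b] and let σ_* > 0 satisfy Σ_t(x) ≥ σ_* for all x ∈ [−b,b]. Then (∫_{−1}^{1} ∫_{−b}^{b} Ψ(x,μ)² dx dμ)^{1/2} ≤ σ_*⁻¹ (∫_{−1}^{1} ∫_{−b}^{b} (μ ∂ₓΨ(x,μ)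 + Σ_t(x)Ψ(x,μ))² dx dμ)^{1/2}. -/
open Set MeasureTheory

/-! Multiply `μ ψ' + σ ψ` by `σ_* ψ` and integrate in `x`: since `2 ψ ψ' = (ψ²)'`, the
streaming term contributes the boundary flux `σ_* μ (ψ(b)² - ψ(-b)²)`, which is nonnegative
under the vacuum condition, and `σ ≥ σ_*` then gives `σ_*² ∫ ψ² ≤ ∫ (μ ψ' + σ ψ)²` on each
direction slice. Integrating over `μ` and taking square roots gives the bound. -/

theorem ContinuousOn.continuousOn_intervalIntegral_right {X E : Type*} [TopologicalSpace X]
    [NormedAddCommGroup E] [NormedSpace ℝ E] {f : ℝ → X → E} {a b : ℝ} {s : Set X}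
    (hab : a ≤ b) (hf : ContinuousOn (fun p : ℝ × X => f p.1 p.2) (Icc a b ×ˢ s)) :
    ContinuousOn (fun y => ∫ x in a..b, f x y) s := by
  rw [continuousOn_iff_continuous_domRestrict]
  -- Clamping `x` into `[a, b]` changes nothing under the integral but makes the integrand
  -- continuous on all of `ℝ × s`.
  set g : s → ℝ → E := fun y x => f (projIcc a b hab x) y
  have hg : Continuous (Function.uncurry g) :=
    hf.comp_continuous (f := fun p : s × ℝ => ((projIcc a b hab p.2 : ℝ), (p.1 : X)))
      (by fun_prop) fun p => ⟨(projIcc a b hab p.2).2, p.1.2⟩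
  convert intervalIntegral.continuous_parametric_intervalIntegral_of_continuous'
    (μ := volume) hg a b using 2 with y
  refine intervalIntegral.integral_congr fun x hx => ?_
  rw [uIcc_of_le hab] at hx
  simp only [g, projIcc_of_mem hab hx]

theorem mul_sq_sub_sq_nonneg_of_vacuum {μ u v : ℝ} (hu : μ ≤ 0 → u = 0) (hv : 0 ≤ μ → v = 0) :
    0 ≤ μ * (u ^ 2 - v ^ 2) := by
  rcases le_total μ 0 with hμ | hμ
  · rw [hu hμ]
    exact mul_nonneg_of_nonpos_of_nonpos hμ (by nlinarith [sq_nonneg v])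
  · rw [hv hμ]
    exact mul_nonneg hμ (by nlinarith [sq_nonneg u])

theorem integral_sq_le_integral_transport_sq {ψ ψ' σ : ℝ → ℝ} {a c μ σ₀ : ℝ} (hac : a ≤ c)
    (hψ : ContinuousOn ψ (Icc a c)) (hψ' : ContinuousOn ψ' (Icc a c))
    (hderiv : ∀ x ∈ Ioo a c, HasDerivAt ψ (ψ' x) x) (hσ : ContinuousOn σ (Icc a c))
    (hσ₀ : 0 ≤ σ₀) (hlow : ∀ x ∈ Icc a c, σ₀ ≤ σ x) (hflux : 0 ≤ μ * (ψ c ^ 2 - ψ a ^ 2)) :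
    σ₀ ^ 2 * ∫ x in a..c, ψ x ^ 2 ≤ ∫ x in a..c, (μ * ψ' x + σ x * ψ x) ^ 2 := by
  have hψψ' : IntervalIntegrable (fun x => ψ' x * ψ x + ψ x * ψ' x) volume a c :=
    ((hψ'.mul hψ).add (hψ.mul hψ')).intervalIntegrable_of_Icc hac
  have hψ_sq : IntervalIntegrable (fun x => ψ x ^ 2) volume a c :=
    (hψ.pow 2).intervalIntegrable_of_Icc hac
  have hftc : ∫ x in a..c, ψ' x * ψ x + ψ x * ψ' x = ψ c ^ 2 - ψ a ^ 2 := by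
    rw [sq, sq]
    exact intervalIntegral.integral_eq_sub_of_hasDerivAt_of_le hac (hψ.mul hψ)
      (fun x hx => (hderiv x hx).mul (hderiv x hx)) hψψ'
  have hpointwise : ∀ x ∈ Icc a c, σ₀ * μ * (ψ' x * ψ x + ψ x * ψ' x) + σ₀ ^ 2 * ψ x ^ 2
      ≤ (μ * ψ' x + σ x * ψ x) ^ 2 := by
    intro x hx
    -- the difference is `(μ ψ' + (σ - σ₀) ψ)² + 2 σ₀ (σ - σ₀) ψ²`
    nlinarith [sq_nonneg (μ * ψ' x + (σ x - σ₀) * ψ x),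
      mul_nonneg (mul_nonneg hσ₀ (sub_nonneg.2 (hlow x hx))) (sq_nonneg (ψ x))]
  have hmono : ∫ x in a..c, σ₀ * μ * (ψ' x * ψ x + ψ x * ψ' x) + σ₀ ^ 2 * ψ x ^ 2
      ≤ ∫ x in a..c, (μ * ψ' x + σ x * ψ x) ^ 2 :=
    intervalIntegral.integral_mono_on hac ((hψψ'.const_mul _).add (hψ_sq.const_mul _))
      ((((continuousOn_const.mul hψ').add (hσ.mul hψ)).pow 2).intervalIntegrable_of_Icc hac)
      hpointwise
  rw [intervalIntegral.integral_add (hψψ'.const_mul _) (hψ_sq.const_mul _),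
    intervalIntegral.integral_const_mul, intervalIntegral.integral_const_mul, hftc] at hmono
  nlinarith [mul_nonneg hσ₀ hflux]

theorem Real.sqrt_le_inv_mul_sqrt_of_sq_mul_le {σ A B : ℝ} (hσ : 0 < σ) (h : σ ^ 2 * A ≤ B) :
    √A ≤ σ⁻¹ * √B :=
  calc √A = σ⁻¹ * √(σ ^ 2 * A) := by
        rw [Real.sqrt_mul (sq_nonneg σ), Real.sqrt_sq hσ.le, inv_mul_cancel_left₀ hσ.ne']
    _ ≤ σ⁻¹ * √B := by gcongr

/-- `L²` residual bound for 1D slab transport with vacuum boundary condition: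
`‖Ψ‖₀ ≤ σ_*⁻¹ ‖𝒟Ψ‖₀`. -/
theorem transport_L2_residual_bound
    (b : ℝ) (hb : 0 < b) (Ψ Ψx : ℝ → ℝ → ℝ) (sigmaT : ℝ → ℝ) (σstar : ℝ)
    (hΨ : ContinuousOn (fun p : ℝ × ℝ => Ψ p.1 p.2) (Icc (-b) b ×ˢ Icc (-1) 1))
    (hΨx : ContinuousOn (fun p : ℝ × ℝ => Ψx p.1 p.2) (Icc (-b) b ×ˢ Icc (-1) 1))
    (hderiv : ∀ μ ∈ Icc (-1 : ℝ) 1, ∀ x ∈ Icc (-b) b,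
      HasDerivWithinAt (fun t => Ψ t μ) (Ψx x μ) (Icc (-b) b) x)
    (hsigmaT : ContinuousOn sigmaT (Icc (-b) b))
    (hσstar : 0 < σstar)
    (hlow : ∀ x ∈ Icc (-b) b, σstar ≤ sigmaT x)
    (hin₁ : ∀ μ ∈ Icc (-1 : ℝ) 0, Ψ b μ = 0)
    (hin₂ : ∀ μ ∈ Icc (0 : ℝ) 1, Ψ (-b) μ = 0) :
    Real.sqrt (∫ μ in (-1 : ℝ)..1, ∫ x in (-b)..b, (Ψ x μ) ^ 2)
      ≤ σstar⁻¹ * Real.sqrt (∫ μ in (-1 : ℝ)..1, ∫ x in (-b)..b,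
          (μ * Ψx x μ + sigmaT x * Ψ x μ) ^ 2) := by
  have hbb : -b ≤ b := by linarith
  have hslice_cont : ∀ φ : ℝ → ℝ → ℝ,
      ContinuousOn (fun p : ℝ × ℝ => φ p.1 p.2) (Icc (-b) b ×ˢ Icc (-1) 1) →
      ∀ μ ∈ Icc (-1 : ℝ) 1, ContinuousOn (φ · μ) (Icc (-b) b) := fun φ hφ μ hμ =>
    hφ.comp (continuous_id.prodMk continuous_const).continuousOn fun x hx => ⟨hx, hμ⟩
  have hslice : ∀ μ ∈ Icc (-1 : ℝ) 1, σstar ^ 2 * ∫ x in (-b)..b, Ψ x μ ^ 2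
      ≤ ∫ x in (-b)..b, (μ * Ψx x μ + sigmaT x * Ψ x μ) ^ 2 := fun μ hμ =>
    integral_sq_le_integral_transport_sq hbb (hslice_cont Ψ hΨ μ hμ) (hslice_cont Ψx hΨx μ hμ)
      (fun x hx => (hderiv μ hμ x (Ioo_subset_Icc_self hx)).hasDerivAt (Icc_mem_nhds hx.1 hx.2))
      hsigmaT hσstar.le hlow
      (mul_sq_sub_sq_nonneg_of_vacuum (hin₁ μ ⟨hμ.1, ·⟩) (hin₂ μ ⟨·, hμ.2⟩))
  have houter_integrable : ∀ φ : ℝ → ℝ → ℝ,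
      ContinuousOn (fun p : ℝ × ℝ => φ p.1 p.2) (Icc (-b) b ×ˢ Icc (-1) 1) →
      IntervalIntegrable (fun μ => ∫ x in (-b)..b, φ x μ) volume (-1) 1 := fun φ hφ =>
    (hφ.continuousOn_intervalIntegral_right hbb).intervalIntegrable_of_Icc (by norm_num)
  have hresidual : ContinuousOn
      (fun p : ℝ × ℝ => (p.2 * Ψx p.1 p.2 + sigmaT p.1 * Ψ p.1 p.2) ^ 2)
      (Icc (-b) b ×ˢ Icc (-1) 1) :=
    ((continuousOn_snd.mul hΨx).add
      ((hsigmaT.comp continuousOn_fst fun _ hp => hp.1).mul hΨ)).pow 2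
  refine Real.sqrt_le_inv_mul_sqrt_of_sq_mul_le hσstar ?_
  rw [← intervalIntegral.integral_const_mul]
  exact intervalIntegral.integral_mono_on (by norm_num)
    ((houter_integrable _ (hΨ.pow 2)).const_mul _) (houter_integrable _ hresidual) hslice
end

section
/- Let b > 0 and let Ψ : ℝ × ℝ → ℝ be continuous on [−b,b] × [−1,1] with continuous partial derivative ∂ₓΨ on [−b,b] × [−1,1], satisfying Ψ(b,μ) = 0 for all μ ∈ [−1,0] and Ψ(−b,μ) = 0 for all μ ∈ [0,1]. Let Σ_t : ℝ → ℝ be continuous on [−b,b] and let 0 < σ_* ≤ σ* satisfy σ_* ≤ Σ_t(x) ≤ σ* for all x ∈ [−b,b]. Then (∫_{−1}^{1} ∫_{−b}^{b} (Ψ(x,μ)² + (μ ∂ₓΨ(x,μ))²) dx dμ)^{1/2} ≤ C_gr (∫_{−1}^{1} ∫_{−b}^{b} (μ ∂ₓΨ(x,μ) + Σ_t(x)Ψ(x,μ))² dx dμ)^{1/2}, where C_gr = (σ_*⁻² + (1 + σ*/σ_*)²)^{1/2}. -/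
/-!
Fix a direction `μ` and write `D = μ Ψ' + Σ_t Ψ`. Testing `D` against `Ψ`, the streaming term
integrates to the boundary flux `μ (Ψ(b)² - Ψ(-b)²) / 2`, which the vacuum inflow condition makes
nonnegative, so `σ_* ‖Ψ‖² ≤ ⟨D, Ψ⟩` and hence `σ_* ‖Ψ‖ ≤ ‖D‖`. Then `μ Ψ' = D - Σ_t Ψ` is
controlled by `‖D‖` and `σ* ‖Ψ‖`. This bounds the graph norm on each line `μ = const`, and
integrating over `μ` gives the theorem.
-/

open Set MeasureTheory

theorem continuousOn_parametric_intervalIntegral_of_continuousOn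
    {E : Type*} [NormedAddCommGroup E] [NormedSpace ℝ E] {g : ℝ → ℝ → E} {a b c d : ℝ}
    (hab : a ≤ b) (hcd : c ≤ d)
    (hg : ContinuousOn (fun p : ℝ × ℝ => g p.1 p.2) (Icc a b ×ˢ Icc c d)) :
    ContinuousOn (fun y => ∫ x in a..b, g x y) (Icc c d) := by
  -- clamping both variables extends `g` continuously to the whole plane
  set G : ℝ → ℝ → E := fun y x => g (projIcc a b hab x) (projIcc c d hcd y)
  have hG : Continuous (Function.uncurry G) :=
    hg.comp_continuous
      (f := fun p : ℝ × ℝ => ((projIcc a b hab p.2 : ℝ), (projIcc c d hcd p.1 : ℝ)))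
      (by fun_prop) fun p => ⟨(projIcc a b hab p.2).2, (projIcc c d hcd p.1).2⟩
  refine (intervalIntegral.continuous_parametric_intervalIntegral_of_continuous' hG a b
    ).continuousOn.congr fun y hy => intervalIntegral.integral_congr fun x hx => ?_
  rw [uIcc_of_le hab] at hx
  simp only [G, projIcc_of_mem hab hx, projIcc_of_mem hcd hy]

/-- Young's inequality `(v - σ u)² ≤ (1 + ε) v² + (1 + ε⁻¹) σ² u²` with `ε = S / s`; this weight
makes the constants add up to `s⁻² + (1 + S / s)²` once `s² ∫ u² ≤ ∫ v²` is used. -/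
theorem sq_add_sq_le_of_mem_Icc {s S σ u w : ℝ} (hs : 0 < s) (hσ : σ ∈ Icc s S) :
    u ^ 2 + w ^ 2 ≤ (1 + S / s) * (w + σ * u) ^ 2 + (1 + S * s + S ^ 2) * u ^ 2 := by
  obtain ⟨hlo, hhi⟩ := hσ
  have hS : 0 < S := hs.trans_le (hlo.trans hhi)
  rw [← mul_le_mul_iff_right₀ (mul_pos hs hS)]
  have e : s * S * ((1 + S / s) * (w + σ * u) ^ 2) = S * (s + S) * (w + σ * u) ^ 2 := by
    field_simp
  rw [mul_add _ _ ((1 + S * s + S ^ 2) * u ^ 2), e]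
  -- the difference is `(S (w + σ u) + s σ u)² + s (s + S) (S² - σ²) u²`
  nlinarith [sq_nonneg (S * (w + σ * u) + s * σ * u),
    mul_nonneg (mul_nonneg (mul_nonneg hs.le (by linarith : 0 ≤ s + S))
      (mul_nonneg (sub_nonneg.2 hhi) (by linarith : 0 ≤ S + σ))) (sq_nonneg u)]

section Coercive

variable {α : Type*} [MeasurableSpace α] {ν : Measure α}

theorem sq_mul_integral_sq_le_integral_sq {u v : α → ℝ} {s : ℝ} (hs : 0 ≤ s)
    (hu : Integrable (fun x => u x ^ 2) ν) (hv : Integrable (fun x => v x ^ 2) ν)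
    (huv : Integrable (fun x => v x * u x) ν)
    (hcoer : s * ∫ x, u x ^ 2 ∂ν ≤ ∫ x, v x * u x ∂ν) :
    s ^ 2 * ∫ x, u x ^ 2 ∂ν ≤ ∫ x, v x ^ 2 ∂ν := by
  have hyoung : ∫ x, 2 * s * (v x * u x) ∂ν ≤ ∫ x, (v x ^ 2 + s ^ 2 * u x ^ 2) ∂ν :=
    integral_mono (huv.const_mul _) (hv.add (hu.const_mul _))
      fun x => by nlinarith [sq_nonneg (v x - s * u x)]
  rw [integral_const_mul, integral_add hv (hu.const_mul _), integral_const_mul] at hyoung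
  nlinarith [mul_le_mul_of_nonneg_left hcoer hs]

theorem integral_sq_add_sq_le_of_coercive {u w σ : α → ℝ} {s S : ℝ} (hs : 0 < s) (hsS : s ≤ S)
    (hσ : ∀ᵐ x ∂ν, σ x ∈ Icc s S)
    (hu : Integrable (fun x => u x ^ 2) ν) (hw : Integrable (fun x => w x ^ 2) ν)
    (hv : Integrable (fun x => (w x + σ x * u x) ^ 2) ν)
    (huv : Integrable (fun x => (w x + σ x * u x) * u x) ν)
    (hcoer : s * ∫ x, u x ^ 2 ∂ν ≤ ∫ x, (w x + σ x * u x) * u x ∂ν) :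
    ∫ x, (u x ^ 2 + w x ^ 2) ∂ν
      ≤ (s⁻¹ ^ 2 + (1 + S / s) ^ 2) * ∫ x, (w x + σ x * u x) ^ 2 ∂ν := by
  set K := 1 + S * s + S ^ 2
  have hpt : ∀ᵐ x ∂ν,
      u x ^ 2 + w x ^ 2 ≤ (1 + S / s) * (w x + σ x * u x) ^ 2 + K * u x ^ 2 := by
    filter_upwards [hσ] with x hx using sq_add_sq_le_of_mem_Icc hs hx
  have hL2 := sq_mul_integral_sq_le_integral_sq hs.le hu hv huv hcoer
  have hmono : ∫ x, (u x ^ 2 + w x ^ 2) ∂ν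
      ≤ ∫ x, ((1 + S / s) * (w x + σ x * u x) ^ 2 + K * u x ^ 2) ∂ν :=
    integral_mono_ae (hu.add hw) ((hv.const_mul _).add (hu.const_mul _)) hpt
  rw [integral_add (hv.const_mul _) (hu.const_mul _), integral_const_mul,
    integral_const_mul] at hmono
  set P := ∫ x, u x ^ 2 ∂ν
  set Q := ∫ x, (w x + σ x * u x) ^ 2 ∂ν
  have hK : 0 ≤ K := by have := hs.trans_le hsS; positivity
  calc ∫ x, (u x ^ 2 + w x ^ 2) ∂ν
      ≤ (1 + S / s) * Q + K * P := hmono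
    _ ≤ (1 + S / s) * Q + K * (Q / s ^ 2) := by
        gcongr
        rwa [le_div_iff₀ (by positivity), mul_comm]
    _ = (s⁻¹ ^ 2 + (1 + S / s) ^ 2) * Q := by
        simp only [K]
        field_simp
        ring

end Coercive

section Slab

variable {a c μ s S : ℝ} {f f' σ : ℝ → ℝ}

theorem integral_deriv_mul_self (hac : a ≤ c)
    (hd : ∀ x ∈ Icc a c, HasDerivWithinAt f (f' x) (Icc a c) x)
    (hf' : IntervalIntegrable f' volume a c) :
    ∫ x in a..c, f' x * f x = (f c ^ 2 - f a ^ 2) / 2 := by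
  rw [← uIcc_of_le hac] at hd
  have h := intervalIntegral.integral_deriv_mul_eq_sub_of_hasDerivWithinAt hd hd hf' hf'
  simp_rw [mul_comm (f _) (f' _), ← two_mul, intervalIntegral.integral_const_mul] at h
  linarith

theorem mul_integral_sq_le_integral_transport_mul (hac : a ≤ c)
    (hd : ∀ x ∈ Icc a c, HasDerivWithinAt f (f' x) (Icc a c) x)
    (hf' : ContinuousOn f' (Icc a c)) (hσc : ContinuousOn σ (Icc a c))
    (hσ : ∀ x ∈ Icc a c, s ≤ σ x) (hbdry : 0 ≤ μ * (f c ^ 2 - f a ^ 2)) :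
    s * ∫ x in a..c, f x ^ 2 ≤ ∫ x in a..c, (μ * f' x + σ x * f x) * f x := by
  have hf : ContinuousOn f (Icc a c) := fun x hx => (hd x hx).continuousWithinAt
  have I : ∀ {g : ℝ → ℝ}, ContinuousOn g (Icc a c) → IntervalIntegrable g volume a c :=
    fun hg => hg.intervalIntegrable_of_Icc hac
  have hsplit : ∫ x in a..c, (μ * f' x + σ x * f x) * f x
      = μ * ((f c ^ 2 - f a ^ 2) / 2) + ∫ x in a..c, σ x * f x ^ 2 := by
    rw [← integral_deriv_mul_self hac hd (I hf'), ← intervalIntegral.integral_const_mul,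
      ← intervalIntegral.integral_add (I (g := fun x => μ * (f' x * f x)) (by fun_prop))
        (I (g := fun x => σ x * f x ^ 2) (by fun_prop))]
    exact intervalIntegral.integral_congr fun x _ => by ring
  have hlow : s * ∫ x in a..c, f x ^ 2 ≤ ∫ x in a..c, σ x * f x ^ 2 := by
    rw [← intervalIntegral.integral_const_mul]
    exact intervalIntegral.integral_mono_on hac (I (by fun_prop)) (I (by fun_prop))
      fun x hx => mul_le_mul_of_nonneg_right (hσ x hx) (sq_nonneg _)
  rw [hsplit]
  linarith

theorem integral_sq_add_sq_le_integral_transport_sq (hac : a ≤ c)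
    (hd : ∀ x ∈ Icc a c, HasDerivWithinAt f (f' x) (Icc a c) x)
    (hf' : ContinuousOn f' (Icc a c)) (hσc : ContinuousOn σ (Icc a c)) (hs : 0 < s)
    (hσ : ∀ x ∈ Icc a c, s ≤ σ x ∧ σ x ≤ S) (hbdry : 0 ≤ μ * (f c ^ 2 - f a ^ 2)) :
    ∫ x in a..c, (f x ^ 2 + (μ * f' x) ^ 2)
      ≤ (s⁻¹ ^ 2 + (1 + S / s) ^ 2) * ∫ x in a..c, (μ * f' x + σ x * f x) ^ 2 := by
  have hf : ContinuousOn f (Icc a c) := fun x hx => (hd x hx).continuousWithinAt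
  have I : ∀ {g : ℝ → ℝ}, ContinuousOn g (Icc a c) → Integrable g (volume.restrict (Ioc a c)) :=
    fun hg => hg.integrableOn_Icc.mono_set Ioc_subset_Icc_self
  have hD : ContinuousOn (fun x => μ * f' x + σ x * f x) (Icc a c) := by fun_prop
  have hcoer :=
    mul_integral_sq_le_integral_transport_mul hac hd hf' hσc (fun x hx => (hσ x hx).1) hbdry
  have hsS : s ≤ S := (hσ a ⟨le_rfl, hac⟩).1.trans (hσ a ⟨le_rfl, hac⟩).2
  have hσae : ∀ᵐ x ∂volume.restrict (Ioc a c), σ x ∈ Icc s S :=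
    (ae_restrict_iff' measurableSet_Ioc).2 (.of_forall fun x hx => hσ x (Ioc_subset_Icc_self hx))
  simp only [intervalIntegral.integral_of_le hac] at hcoer ⊢
  exact integral_sq_add_sq_le_of_coercive hs hsS hσae (I (hf.pow 2))
    (I ((continuousOn_const.mul hf').pow 2)) (I (hD.pow 2)) (I (hD.mul hf)) hcoer

end Slab

theorem mul_sq_sub_sq_nonneg_of_inflow_eq_zero {μ p q : ℝ} (hp : μ ≤ 0 → p = 0)
    (hq : 0 ≤ μ → q = 0) : 0 ≤ μ * (p ^ 2 - q ^ 2) := by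
  rcases le_total 0 μ with hμ | hμ
  · rw [hq hμ]; nlinarith [mul_nonneg hμ (sq_nonneg p)]
  · rw [hp hμ]; nlinarith [mul_nonneg (neg_nonneg.2 hμ) (sq_nonneg q)]

theorem transport_graph_norm_control_general
    (b : ℝ) (hb : 0 < b) (Ψ Ψx : ℝ → ℝ → ℝ) (sigmaT : ℝ → ℝ) (σstar σsup : ℝ)
    (hΨ : ContinuousOn (fun p : ℝ × ℝ => Ψ p.1 p.2) (Icc (-b) b ×ˢ Icc (-1) 1))
    (hΨx : ContinuousOn (fun p : ℝ × ℝ => Ψx p.1 p.2) (Icc (-b) b ×ˢ Icc (-1) 1))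
    (hderiv : ∀ μ ∈ Icc (-1 : ℝ) 1, ∀ x ∈ Icc (-b) b,
      HasDerivWithinAt (fun t => Ψ t μ) (Ψx x μ) (Icc (-b) b) x)
    (hsigmaT : ContinuousOn sigmaT (Icc (-b) b))
    (hσstar : 0 < σstar)
    (hbound : ∀ x ∈ Icc (-b) b, σstar ≤ sigmaT x ∧ sigmaT x ≤ σsup)
    (hin₁ : ∀ μ ∈ Icc (-1 : ℝ) 0, Ψ b μ = 0)
    (hin₂ : ∀ μ ∈ Icc (0 : ℝ) 1, Ψ (-b) μ = 0) :
    Real.sqrt (∫ μ in (-1 : ℝ)..1, ∫ x in (-b)..b,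
        ((Ψ x μ) ^ 2 + (μ * Ψx x μ) ^ 2))
      ≤ Real.sqrt (σstar⁻¹ ^ 2 + (1 + σsup / σstar) ^ 2)
        * Real.sqrt (∫ μ in (-1 : ℝ)..1, ∫ x in (-b)..b,
            (μ * Ψx x μ + sigmaT x * Ψ x μ) ^ 2) := by
  have hbb : -b ≤ b := by linarith
  have h11 : (-1 : ℝ) ≤ 1 := by norm_num
  have hσ₂ : ContinuousOn (fun p : ℝ × ℝ => sigmaT p.1) (Icc (-b) b ×ˢ Icc (-1) 1) :=
    hsigmaT.comp continuousOn_fst fun _ hp => hp.1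
  have hinner : ∀ μ ∈ Icc (-1 : ℝ) 1, ∫ x in (-b)..b, ((Ψ x μ) ^ 2 + (μ * Ψx x μ) ^ 2)
      ≤ (σstar⁻¹ ^ 2 + (1 + σsup / σstar) ^ 2)
        * ∫ x in (-b)..b, (μ * Ψx x μ + sigmaT x * Ψ x μ) ^ 2 := fun μ hμ =>
    integral_sq_add_sq_le_integral_transport_sq hbb (hderiv μ hμ) (hΨx.uncurry_right μ hμ)
      hsigmaT hσstar hbound (mul_sq_sub_sq_nonneg_of_inflow_eq_zero
        (fun h => hin₁ μ ⟨hμ.1, h⟩) (fun h => hin₂ μ ⟨h, hμ.2⟩))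
  have hlhs := (continuousOn_parametric_intervalIntegral_of_continuousOn hbb h11
    (g := fun x μ => Ψ x μ ^ 2 + (μ * Ψx x μ) ^ 2)
    ((hΨ.pow 2).add ((continuousOn_snd.mul hΨx).pow 2))).intervalIntegrable_of_Icc
    (μ := volume) h11
  have hrhs := (continuousOn_parametric_intervalIntegral_of_continuousOn hbb h11
    (g := fun x μ => (μ * Ψx x μ + sigmaT x * Ψ x μ) ^ 2)
    (((continuousOn_snd.mul hΨx).add (hσ₂.mul hΨ)).pow 2)).intervalIntegrable_of_Icc
    (μ := volume) h11
  rw [← Real.sqrt_mul (by positivity), ← intervalIntegral.integral_const_mul]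
  exact Real.sqrt_le_sqrt (intervalIntegral.integral_mono_on h11 hlhs (hrhs.const_mul _) hinner)

/-- Graph-norm control by the transport residual in 1D slab geometry with
vacuum boundary condition: `‖Ψ‖_gr ≤ C_gr ‖𝒟Ψ‖₀` with
`C_gr = (σ_*⁻² + (1 + σ*/σ_*)²)^{1/2}`. -/
theorem transport_graph_norm_control
    (b : ℝ) (hb : 0 < b) (Ψ Ψx : ℝ → ℝ → ℝ) (sigmaT : ℝ → ℝ) (σstar σsup : ℝ)
    (hΨ : ContinuousOn (fun p : ℝ × ℝ => Ψ p.1 p.2) (Icc (-b) b ×ˢ Icc (-1) 1))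
    (hΨx : ContinuousOn (fun p : ℝ × ℝ => Ψx p.1 p.2) (Icc (-b) b ×ˢ Icc (-1) 1))
    (hderiv : ∀ μ ∈ Icc (-1 : ℝ) 1, ∀ x ∈ Icc (-b) b,
      HasDerivWithinAt (fun t => Ψ t μ) (Ψx x μ) (Icc (-b) b) x)
    (hsigmaT : ContinuousOn sigmaT (Icc (-b) b))
    (hσstar : 0 < σstar) (hσ : σstar ≤ σsup)
    (hbound : ∀ x ∈ Icc (-b) b, σstar ≤ sigmaT x ∧ sigmaT x ≤ σsup)
    (hin₁ : ∀ μ ∈ Icc (-1 : ℝ) 0, Ψ b μ = 0)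
    (hin₂ : ∀ μ ∈ Icc (0 : ℝ) 1, Ψ (-b) μ = 0) :
    Real.sqrt (∫ μ in (-1 : ℝ)..1, ∫ x in (-b)..b,
        ((Ψ x μ) ^ 2 + (μ * Ψx x μ) ^ 2))
      ≤ Real.sqrt (σstar⁻¹ ^ 2 + (1 + σsup / σstar) ^ 2)
        * Real.sqrt (∫ μ in (-1 : ℝ)..1, ∫ x in (-b)..b,
            (μ * Ψx x μ + sigmaT x * Ψ x μ) ^ 2) :=
  transport_graph_norm_control_general b hb Ψ Ψx sigmaT σstar σsup hΨ hΨx hderiv hsigmaT hσstar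
    hbound hin₁ hin₂
end

section
/- Let b > 0 and let Ψ : ℝ × ℝ → ℝ be continuous on [−b,b] × [−1,1] with continuous partial derivative ∂ₓΨ on [−b,b] × [−1,1], satisfying Ψ(b,μ) = 0 for all μ ∈ [−1,0] and Ψ(−b,μ) = 0 for all μ ∈ [0,1]. Let Σ_t : ℝ → ℝ be continuous on [−b,b] with Σ_t(x) ≥ σ_* for all x ∈ [−b,b], and let Σ_s be a constant with 0 ≤ Σ_s < σ_*. Define the full transport residual R(x,μ) = μ ∂ₓΨ(x,μ) + Σ_t(x)Ψ(x,μ) − (Σ_s/2) ∫_{−1}^{1} Ψ(x,μ') dμ'. Then (∫_{−1}^{1} ∫_{−b}^{b} Ψ(x,μ)² dx dμ)^{1/2} ≤ (σ_* − Σ_s)⁻¹ (∫_{−1}^{1} ∫_{−b}^{b} R(x,μ)² dx dμ)^{1/2}. -/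
/-!
Pair the residual with `Ψ` in `L²` of the phase-space rectangle. Integrating in `x` for fixed `μ`,
the streaming term gives the boundary flux `μ (Ψ(b,μ)² - Ψ(-b,μ)²) / 2`, which the vacuum condition
makes nonnegative; absorption contributes at least `σ_* ‖Ψ‖²`; and the scattering term is
`(Σ_s/2) ‖φ‖²` for the scalar flux `φ`, at most `Σ_s ‖Ψ‖²` by Cauchy–Schwarz in `μ`. Hence
`(σ_* - Σ_s) ‖Ψ‖² ≤ ⟨R, Ψ⟩ ≤ ‖R‖ ‖Ψ‖`.
-/

open Set MeasureTheory

section CauchySchwarz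

variable {α : Type*} [MeasurableSpace α] {μ : Measure α} {f g : α → ℝ}

theorem sq_integral_mul_le_integral_sq_mul_integral_sq (hf : Integrable (fun x => f x ^ 2) μ)
    (hg : Integrable (fun x => g x ^ 2) μ) (hfg : Integrable (fun x => f x * g x) μ) :
    (∫ x, f x * g x ∂μ) ^ 2 ≤ (∫ x, f x ^ 2 ∂μ) * ∫ x, g x ^ 2 ∂μ := by
  have hquad : ∀ t : ℝ,
      0 ≤ (∫ x, f x ^ 2 ∂μ) * (t * t) + (-2 * ∫ x, f x * g x ∂μ) * t + ∫ x, g x ^ 2 ∂μ := by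
    intro t
    have hexpand : (fun x => (t * f x - g x) ^ 2)
        = fun x => t * t * f x ^ 2 + (-2 * t * (f x * g x) + g x ^ 2) := by
      funext x; ring
    have hsq : 0 ≤ ∫ x, (t * f x - g x) ^ 2 ∂μ := integral_nonneg fun x => sq_nonneg _
    rw [hexpand, integral_add (hf.const_mul _) ((hfg.const_mul _).fun_add hg),
      integral_add (hfg.const_mul _) hg, integral_const_mul, integral_const_mul] at hsq
    linarith
  have := discrim_le_zero hquad
  rw [discrim] at this
  linarith

theorem integral_mul_le_sqrt_integral_sq_mul_sqrt_integral_sq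
    (hf : Integrable (fun x => f x ^ 2) μ) (hg : Integrable (fun x => g x ^ 2) μ)
    (hfg : Integrable (fun x => f x * g x) μ) :
    ∫ x, f x * g x ∂μ ≤ √(∫ x, f x ^ 2 ∂μ) * √(∫ x, g x ^ 2 ∂μ) := by
  rw [← Real.sqrt_mul (integral_nonneg fun x => sq_nonneg (f x))]
  exact Real.le_sqrt_of_sq_le (sq_integral_mul_le_integral_sq_mul_integral_sq hf hg hfg)

theorem sq_integral_le_measureReal_univ_mul_integral_sq [IsFiniteMeasure μ]
    (hf : Integrable f μ) (hf2 : Integrable (fun x => f x ^ 2) μ) :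
    (∫ x, f x ∂μ) ^ 2 ≤ μ.real univ * ∫ x, f x ^ 2 ∂μ := by
  simpa [mul_comm] using
    sq_integral_mul_le_integral_sq_mul_integral_sq (g := fun _ => (1 : ℝ)) hf2
      (by simp) (by simpa using hf)

theorem sqrt_integral_sq_le_inv_mul_of_mul_le_integral_mul {c : ℝ} (hc : 0 < c)
    (hf : Integrable (fun x => f x ^ 2) μ) (hg : Integrable (fun x => g x ^ 2) μ)
    (hfg : Integrable (fun x => f x * g x) μ)
    (hcoer : c * ∫ x, g x ^ 2 ∂μ ≤ ∫ x, f x * g x ∂μ) :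
    √(∫ x, g x ^ 2 ∂μ) ≤ c⁻¹ * √(∫ x, f x ^ 2 ∂μ) := by
  rw [inv_mul_eq_div, le_div_iff₀ hc]
  rcases (Real.sqrt_nonneg (∫ x, g x ^ 2 ∂μ)).eq_or_lt with hzero | hpos
  · rw [← hzero, zero_mul]; exact Real.sqrt_nonneg _
  refine le_of_mul_le_mul_right ?_ hpos
  calc √(∫ x, g x ^ 2 ∂μ) * c * √(∫ x, g x ^ 2 ∂μ)
      = c * ∫ x, g x ^ 2 ∂μ := by
        rw [mul_comm _ c, mul_assoc, Real.mul_self_sqrt (integral_nonneg fun x => sq_nonneg _)]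
    _ ≤ ∫ x, f x * g x ∂μ := hcoer
    _ ≤ √(∫ x, f x ^ 2 ∂μ) * √(∫ x, g x ^ 2 ∂μ) :=
        integral_mul_le_sqrt_integral_sq_mul_sqrt_integral_sq hf hg hfg

end CauchySchwarz

theorem integral_self_mul_deriv {f f' : ℝ → ℝ} {a b : ℝ}
    (hf : ∀ x ∈ uIcc a b, HasDerivWithinAt f (f' x) (uIcc a b) x)
    (hf' : IntervalIntegrable f' volume a b) :
    ∫ x in a..b, f x * f' x = (f b ^ 2 - f a ^ 2) / 2 := by
  have hprod := intervalIntegral.integral_deriv_mul_eq_sub_of_hasDerivWithinAt hf hf hf' hf'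
  have hsym : (fun x => f' x * f x + f x * f' x) = fun x => 2 * (f x * f' x) := by
    funext x; ring
  rw [hsym, intervalIntegral.integral_const_mul] at hprod
  linarith

theorem continuousOn_intervalIntegral_of_continuousOn_prod_s12 {X : Type*} [TopologicalSpace X]
    [FirstCountableTopology X]
    {s : Set X} (hs : IsCompact s) {F : X → ℝ → ℝ} {c d : ℝ} (hcd : c ≤ d)
    (hF : ContinuousOn (Function.uncurry F) (s ×ˢ Icc c d)) :
    ContinuousOn (fun x => ∫ t in c..d, F x t) s := by
  obtain ⟨C, hC⟩ := (hs.prod isCompact_Icc).exists_bound_of_continuousOn hF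
  simp only [intervalIntegral.integral_of_le hcd]
  refine continuousOn_of_dominated (bound := fun _ => C) (fun x hx => ?_) (fun x hx => ?_)
    (integrable_const C) ?_
  · exact ((hF.uncurry_left x hx).mono Ioc_subset_Icc_self).aestronglyMeasurable measurableSet_Ioc
  · filter_upwards [ae_restrict_mem measurableSet_Ioc] with t ht
    exact hC (x, t) ⟨hx, Ioc_subset_Icc_self ht⟩
  · filter_upwards [ae_restrict_mem measurableSet_Ioc] with t ht
    exact hF.uncurry_right t (Ioc_subset_Icc_self ht)

theorem intervalIntegral_intervalIntegral_eq_setIntegral_Icc_prod_Icc {F : ℝ → ℝ → ℝ}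
    {a b c d : ℝ} (hab : a ≤ b) (hcd : c ≤ d)
    (hF : IntegrableOn (fun p : ℝ × ℝ => F p.1 p.2) (Icc a b ×ˢ Icc c d)) :
    ∫ y in c..d, ∫ x in a..b, F x y = ∫ p in Icc a b ×ˢ Icc c d, F p.1 p.2 := by
  rw [IntegrableOn, Measure.volume_eq_prod, ← Measure.prod_restrict] at hF
  rw [Measure.volume_eq_prod, ← Measure.prod_restrict]
  rw [integral_prod_symm (fun p => F p.1 p.2) hF, intervalIntegral.integral_of_le hcd,
    ← integral_Icc_eq_integral_Ioc]
  refine setIntegral_congr_fun measurableSet_Icc fun y _ => ?_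
  rw [intervalIntegral.integral_of_le hab, ← integral_Icc_eq_integral_Ioc]

noncomputable def scalarFlux (Ψ : ℝ → ℝ → ℝ) (x : ℝ) : ℝ := ∫ μ' in (-1 : ℝ)..1, Ψ x μ'

/-- The residual `(𝒟 + ℐ)Ψ` of the one-group transport equation with isotropic scattering. -/
noncomputable def transportResidual (Ψ Ψx : ℝ → ℝ → ℝ) (sigmaT : ℝ → ℝ) (sigmaS x μ : ℝ) : ℝ :=
  μ * Ψx x μ + sigmaT x * Ψ x μ - sigmaS / 2 * scalarFlux Ψ x

section Slab

variable {b : ℝ} {Ψ Ψx : ℝ → ℝ → ℝ}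

theorem continuousOn_scalarFlux
    (hΨ : ContinuousOn (fun p : ℝ × ℝ => Ψ p.1 p.2) (Icc (-b) b ×ˢ Icc (-1) 1)) :
    ContinuousOn (scalarFlux Ψ) (Icc (-b) b) :=
  continuousOn_intervalIntegral_of_continuousOn_prod_s12 isCompact_Icc (by norm_num) hΨ

theorem scalarFlux_eq_setIntegral (x : ℝ) : scalarFlux Ψ x = ∫ μ in Icc (-1 : ℝ) 1, Ψ x μ := by
  rw [scalarFlux, intervalIntegral.integral_of_le (by norm_num), integral_Icc_eq_integral_Ioc]

theorem scalarFlux_sq_le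
    (hΨ : ContinuousOn (fun p : ℝ × ℝ => Ψ p.1 p.2) (Icc (-b) b ×ˢ Icc (-1) 1))
    {x : ℝ} (hx : x ∈ Icc (-b) b) :
    scalarFlux Ψ x ^ 2 ≤ 2 * ∫ μ in Icc (-1 : ℝ) 1, Ψ x μ ^ 2 := by
  have hslice : ContinuousOn (Ψ x) (Icc (-1) 1) := hΨ.uncurry_left x hx
  have hvol : (volume.restrict (Icc (-1 : ℝ) 1)).real univ = 2 := by norm_num
  rw [scalarFlux_eq_setIntegral, ← hvol]
  exact sq_integral_le_measureReal_univ_mul_integral_sq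
    (hslice.integrableOn_compact isCompact_Icc) ((hslice.pow 2).integrableOn_compact isCompact_Icc)

theorem continuousOn_transportResidual {sigmaT : ℝ → ℝ} (sigmaS : ℝ)
    (hΨ : ContinuousOn (fun p : ℝ × ℝ => Ψ p.1 p.2) (Icc (-b) b ×ˢ Icc (-1) 1))
    (hΨx : ContinuousOn (fun p : ℝ × ℝ => Ψx p.1 p.2) (Icc (-b) b ×ˢ Icc (-1) 1))
    (hsigmaT : ContinuousOn sigmaT (Icc (-b) b)) :
    ContinuousOn (fun p : ℝ × ℝ => transportResidual Ψ Ψx sigmaT sigmaS p.1 p.2)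
      (Icc (-b) b ×ˢ Icc (-1) 1) :=
  ((continuous_snd.continuousOn.mul hΨx).add
    ((hsigmaT.comp continuous_fst.continuousOn fun _ hp => hp.1).mul hΨ)).sub
      (continuousOn_const.mul
        ((continuousOn_scalarFlux hΨ).comp continuous_fst.continuousOn fun _ hp => hp.1))

theorem setIntegral_streaming_nonneg (hb : 0 ≤ b)
    (hΨ : ContinuousOn (fun p : ℝ × ℝ => Ψ p.1 p.2) (Icc (-b) b ×ˢ Icc (-1) 1))
    (hΨx : ContinuousOn (fun p : ℝ × ℝ => Ψx p.1 p.2) (Icc (-b) b ×ˢ Icc (-1) 1))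
    (hderiv : ∀ μ ∈ Icc (-1 : ℝ) 1, ∀ x ∈ Icc (-b) b,
      HasDerivWithinAt (fun t => Ψ t μ) (Ψx x μ) (Icc (-b) b) x)
    (hin₁ : ∀ μ ∈ Icc (-1 : ℝ) 0, Ψ b μ = 0)
    (hin₂ : ∀ μ ∈ Icc (0 : ℝ) 1, Ψ (-b) μ = 0) :
    0 ≤ ∫ p in Icc (-b) b ×ˢ Icc (-1) 1, p.2 * Ψx p.1 p.2 * Ψ p.1 p.2 := by
  have hbb : -b ≤ b := by linarith
  rw [← intervalIntegral_intervalIntegral_eq_setIntegral_Icc_prod_Icc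
    (F := fun x μ => μ * Ψx x μ * Ψ x μ) hbb (by norm_num)
    (((continuous_snd.continuousOn.mul hΨx).mul hΨ).integrableOn_compact
      (isCompact_Icc.prod isCompact_Icc))]
  refine intervalIntegral.integral_nonneg (by norm_num) fun μ hμ => ?_
  have hboundary : ∫ x in -b..b, Ψ x μ * Ψx x μ = (Ψ b μ ^ 2 - Ψ (-b) μ ^ 2) / 2 :=
    integral_self_mul_deriv (by rw [uIcc_of_le hbb]; exact hderiv μ hμ)
      ((hΨx.uncurry_right μ hμ).intervalIntegrable_of_Icc hbb)
  simp_rw [mul_assoc, mul_comm (Ψx _ μ)]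
  rw [intervalIntegral.integral_const_mul, hboundary]
  -- the vacuum condition kills the inflow value, leaving the outflow one with weight `|μ| / 2`
  rcases le_total μ 0 with hμneg | hμpos
  · rw [hin₁ μ ⟨hμ.1, hμneg⟩]
    nlinarith [sq_nonneg (Ψ (-b) μ)]
  · rw [hin₂ μ ⟨hμpos, hμ.2⟩]
    nlinarith [sq_nonneg (Ψ b μ)]

theorem setIntegral_scalarFlux_mul_le
    (hΨ : ContinuousOn (fun p : ℝ × ℝ => Ψ p.1 p.2) (Icc (-b) b ×ˢ Icc (-1) 1)) :
    ∫ p in Icc (-b) b ×ˢ Icc (-1) 1, scalarFlux Ψ p.1 * Ψ p.1 p.2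
      ≤ 2 * ∫ p in Icc (-b) b ×ˢ Icc (-1) 1, Ψ p.1 p.2 ^ 2 := by
  have hK : IsCompact (Icc (-b) b ×ˢ Icc (-1 : ℝ) 1) := isCompact_Icc.prod isCompact_Icc
  have hsq : IntegrableOn (fun p : ℝ × ℝ => Ψ p.1 p.2 ^ 2) (Icc (-b) b ×ˢ Icc (-1) 1) :=
    (hΨ.pow 2).integrableOn_compact hK
  have hflux : IntegrableOn (fun p : ℝ × ℝ => scalarFlux Ψ p.1 * Ψ p.1 p.2)
      (Icc (-b) b ×ˢ Icc (-1) 1) :=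
    (((continuousOn_scalarFlux hΨ).comp continuous_fst.continuousOn fun _ hp => hp.1).mul
      hΨ).integrableOn_compact hK
  rw [Measure.volume_eq_prod] at hsq hflux ⊢
  rw [setIntegral_prod _ hflux, setIntegral_prod _ hsq, ← integral_const_mul]
  rw [IntegrableOn, ← Measure.prod_restrict] at hsq hflux
  refine setIntegral_mono_on hflux.integral_prod_left (hsq.integral_prod_left.const_mul 2)
    measurableSet_Icc fun x hx => ?_
  dsimp only
  rw [integral_const_mul, ← scalarFlux_eq_setIntegral, ← sq]
  exact scalarFlux_sq_le hΨ hx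

theorem mul_setIntegral_sq_le_setIntegral_transportResidual_mul {sigmaT : ℝ → ℝ}
    {σstar sigmaS : ℝ} (hb : 0 ≤ b)
    (hΨ : ContinuousOn (fun p : ℝ × ℝ => Ψ p.1 p.2) (Icc (-b) b ×ˢ Icc (-1) 1))
    (hΨx : ContinuousOn (fun p : ℝ × ℝ => Ψx p.1 p.2) (Icc (-b) b ×ˢ Icc (-1) 1))
    (hderiv : ∀ μ ∈ Icc (-1 : ℝ) 1, ∀ x ∈ Icc (-b) b,
      HasDerivWithinAt (fun t => Ψ t μ) (Ψx x μ) (Icc (-b) b) x)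
    (hsigmaT : ContinuousOn sigmaT (Icc (-b) b))
    (hlow : ∀ x ∈ Icc (-b) b, σstar ≤ sigmaT x) (hsigmaS : 0 ≤ sigmaS)
    (hin₁ : ∀ μ ∈ Icc (-1 : ℝ) 0, Ψ b μ = 0)
    (hin₂ : ∀ μ ∈ Icc (0 : ℝ) 1, Ψ (-b) μ = 0) :
    (σstar - sigmaS) * ∫ p in Icc (-b) b ×ˢ Icc (-1) 1, Ψ p.1 p.2 ^ 2
      ≤ ∫ p in Icc (-b) b ×ˢ Icc (-1) 1,
          transportResidual Ψ Ψx sigmaT sigmaS p.1 p.2 * Ψ p.1 p.2 := by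
  set K := Icc (-b) b ×ˢ Icc (-1 : ℝ) 1
  have hintegrable {f : ℝ × ℝ → ℝ} (hf : ContinuousOn f K) : IntegrableOn f K :=
    hf.integrableOn_compact (isCompact_Icc.prod isCompact_Icc)
  have hsigmaT' : ContinuousOn (fun p : ℝ × ℝ => sigmaT p.1) K :=
    hsigmaT.comp continuous_fst.continuousOn fun _ hp => hp.1
  have hflux : ContinuousOn (fun p : ℝ × ℝ => scalarFlux Ψ p.1) K :=
    (continuousOn_scalarFlux hΨ).comp continuous_fst.continuousOn fun _ hp => hp.1
  have hstreaming : IntegrableOn (fun p : ℝ × ℝ => p.2 * Ψx p.1 p.2 * Ψ p.1 p.2) K :=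
    hintegrable ((continuous_snd.continuousOn.mul hΨx).mul hΨ)
  have habsorption : IntegrableOn (fun p : ℝ × ℝ => sigmaT p.1 * Ψ p.1 p.2 ^ 2) K :=
    hintegrable (hsigmaT'.mul (hΨ.pow 2))
  have hscattering : IntegrableOn (fun p : ℝ × ℝ => scalarFlux Ψ p.1 * Ψ p.1 p.2) K :=
    hintegrable (hflux.mul hΨ)
  have hsplit : ∫ p in K, transportResidual Ψ Ψx sigmaT sigmaS p.1 p.2 * Ψ p.1 p.2
      = (∫ p in K, p.2 * Ψx p.1 p.2 * Ψ p.1 p.2)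
        + ((∫ p in K, sigmaT p.1 * Ψ p.1 p.2 ^ 2)
          - sigmaS / 2 * ∫ p in K, scalarFlux Ψ p.1 * Ψ p.1 p.2) := by
    rw [← integral_const_mul, ← integral_sub habsorption (hscattering.const_mul _),
      ← integral_add hstreaming (habsorption.fun_sub (hscattering.const_mul _))]
    congr 1 with p
    rw [transportResidual]
    ring
  have habsorption_ge :
      σstar * ∫ p in K, Ψ p.1 p.2 ^ 2 ≤ ∫ p in K, sigmaT p.1 * Ψ p.1 p.2 ^ 2 := by
    rw [← integral_const_mul]
    exact setIntegral_mono_on ((hintegrable (hΨ.pow 2)).const_mul _) habsorption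
      (measurableSet_Icc.prod measurableSet_Icc) fun p hp =>
        mul_le_mul_of_nonneg_right (hlow p.1 hp.1) (sq_nonneg _)
  have hscattering_le : sigmaS / 2 * ∫ p in K, scalarFlux Ψ p.1 * Ψ p.1 p.2
      ≤ sigmaS / 2 * (2 * ∫ p in K, Ψ p.1 p.2 ^ 2) :=
    mul_le_mul_of_nonneg_left (setIntegral_scalarFlux_mul_le hΨ) (by positivity)
  have hstreaming_nonneg : 0 ≤ ∫ p in K, p.2 * Ψx p.1 p.2 * Ψ p.1 p.2 :=
    setIntegral_streaming_nonneg hb hΨ hΨx hderiv hin₁ hin₂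
  rw [hsplit]
  linarith

end Slab

/-- `L²` bound for the full one-group transport operator with isotropic
scattering under the smallness condition `Σ_s < σ_*`:
`‖Ψ‖₀ ≤ (σ_* − Σ_s)⁻¹ ‖(𝒟 + ℐ)Ψ‖₀`. -/
theorem full_transport_L2_residual_bound
    (b : ℝ) (hb : 0 < b) (Ψ Ψx : ℝ → ℝ → ℝ) (sigmaT : ℝ → ℝ) (σstar sigmaS : ℝ)
    (hΨ : ContinuousOn (fun p : ℝ × ℝ => Ψ p.1 p.2) (Icc (-b) b ×ˢ Icc (-1) 1))
    (hΨx : ContinuousOn (fun p : ℝ × ℝ => Ψx p.1 p.2) (Icc (-b) b ×ˢ Icc (-1) 1))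
    (hderiv : ∀ μ ∈ Icc (-1 : ℝ) 1, ∀ x ∈ Icc (-b) b,
      HasDerivWithinAt (fun t => Ψ t μ) (Ψx x μ) (Icc (-b) b) x)
    (hsigmaT : ContinuousOn sigmaT (Icc (-b) b))
    (hlow : ∀ x ∈ Icc (-b) b, σstar ≤ sigmaT x)
    (hsigmaS : 0 ≤ sigmaS) (hsmall : sigmaS < σstar)
    (hin₁ : ∀ μ ∈ Icc (-1 : ℝ) 0, Ψ b μ = 0)
    (hin₂ : ∀ μ ∈ Icc (0 : ℝ) 1, Ψ (-b) μ = 0) :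
    Real.sqrt (∫ μ in (-1 : ℝ)..1, ∫ x in (-b)..b, (Ψ x μ) ^ 2)
      ≤ (σstar - sigmaS)⁻¹ *
        Real.sqrt (∫ μ in (-1 : ℝ)..1, ∫ x in (-b)..b,
          (μ * Ψx x μ + sigmaT x * Ψ x μ
            - (sigmaS / 2) * ∫ μ' in (-1 : ℝ)..1, Ψ x μ') ^ 2) := by
  have hintegrable {f : ℝ × ℝ → ℝ} (hf : ContinuousOn f (Icc (-b) b ×ˢ Icc (-1) 1)) :
      IntegrableOn f (Icc (-b) b ×ˢ Icc (-1) 1) :=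
    hf.integrableOn_compact (isCompact_Icc.prod isCompact_Icc)
  have hΨ2 : IntegrableOn (fun p : ℝ × ℝ => Ψ p.1 p.2 ^ 2) (Icc (-b) b ×ˢ Icc (-1) 1) :=
    hintegrable (hΨ.pow 2)
  have hR := continuousOn_transportResidual sigmaS hΨ hΨx hsigmaT
  have hR2 : IntegrableOn (fun p : ℝ × ℝ => transportResidual Ψ Ψx sigmaT sigmaS p.1 p.2 ^ 2)
      (Icc (-b) b ×ˢ Icc (-1) 1) :=
    hintegrable (hR.pow 2)
  rw [intervalIntegral_intervalIntegral_eq_setIntegral_Icc_prod_Icc (F := fun x μ => Ψ x μ ^ 2)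
      (by linarith) (by norm_num) hΨ2]
  erw [intervalIntegral_intervalIntegral_eq_setIntegral_Icc_prod_Icc
      (F := fun x μ => transportResidual Ψ Ψx sigmaT sigmaS x μ ^ 2)
      (by linarith) (by norm_num) hR2]
  exact sqrt_integral_sq_le_inv_mul_of_mul_le_integral_mul (sub_pos.2 hsmall) hR2 hΨ2
    (hintegrable (hR.mul hΨ))
    (mul_setIntegral_sq_le_setIntegral_transportResidual_mul hb.le hΨ hΨx hderiv hsigmaT hlow
      hsigmaS hin₁ hin₂)
end
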